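/- Let n ≥ 1 and let v, q : Fin n → ℝ be positive antitone sequences, and let p* : Fin n → ℝ be the recursively defined envy-free prices. Then the identity allocation together with p* is revenue-optimal among all envy-free perfect-matching pricings: for every permutation σ of Fin n and every price vector p : Fin n → ℝ such that p (σ i) ≤ v i * q (σ i) for all i and v i * q (σ i) - p (σ i) ≥ v i * q j - p j for all i, j, one has ∑_{j} p j ≤ ∑_{j} p* j. -/
import Mathlib


/-- Maximum of `f i` over indices `i > k`, well defined when `(k : ℕ) < n - 1`. -/
noncomputable def maxAbove {n : ℕ} (k : Fin n) (hk : (k : ℕ) < n - 1) (f : Fin n → ℝ) : ℝ :=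
  (Finset.univ.filter fun i => k < i).sup'
    ⟨⟨(k : ℕ) + 1, by omega⟩, by
      simp only [Finset.mem_filter, Finset.mem_univ, true_and, Fin.lt_def]
      omega⟩ f

/-- The identity allocation with the recursively defined prices `p*` is
revenue-optimal among all envy-free perfect-matching pricings `(σ, p)`. -/
theorem identity_pstar_revenue_optimal (n : ℕ) (hn : 1 ≤ n) (v q : Fin n → ℝ)
    (hvpos : ∀ i, 0 < v i) (hqpos : ∀ i, 0 < q i)
    (hv : Antitone v) (hq : Antitone q)
    (pstar : Fin n → ℝ)
    (hlast : pstar ⟨n - 1, by omega⟩ = v ⟨n - 1, by omega⟩ * q ⟨n - 1, by omega⟩)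
    (hrec : ∀ (k : Fin n) (hk : (k : ℕ) < n - 1),
      pstar k = v k * q k - maxAbove k hk (fun i => v k * q i - pstar i)) :
    ∀ (σ : Equiv.Perm (Fin n)) (p : Fin n → ℝ),
      (∀ i, p (σ i) ≤ v i * q (σ i)) →
      (∀ i j : Fin n, v i * q (σ i) - p (σ i) ≥ v i * q j - p j) →
      ∑ j, p j ≤ ∑ j, pstar j := by
  intro σ p hIR henvy
  -- pigeonhole: for any item j there is a buyer c ≥ σ⁻¹ j with c ≥ j and σ c ≤ j
  have exc : ∀ j : Fin n, ∃ c : Fin n, σ.symm j ≤ c ∧ j ≤ c ∧ σ c ≤ j := by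
    intro j
    by_cases hbj : j ≤ σ.symm j
    · exact ⟨σ.symm j, le_refl _, hbj, by rw [Equiv.apply_symm_apply]⟩
    · push_neg at hbj
      by_contra hno
      push_neg at hno
      have hmaps : ∀ c ∈ Finset.Ici j, σ c ∈ Finset.Ioi j := by
        intro c hc
        rw [Finset.mem_Ici] at hc
        rw [Finset.mem_Ioi]
        exact hno c (le_trans (le_of_lt hbj) hc) hc
      have hcard := Finset.card_le_card_of_injOn σ hmaps (σ.injective.injOn)
      rw [Fin.card_Ici, Fin.card_Ioi] at hcard
      have := j.isLt
      omega
  have key : ∀ m : ℕ, ∀ j : Fin n, n - (j : ℕ) ≤ m → p j ≤ pstar j := by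
    intro m
    induction m with
    | zero => intro j hj; exact absurd hj (by have := j.isLt; omega)
    | succ m ih =>
      intro j hj
      obtain ⟨c, hbc, hjc, hcj⟩ := exc j
      have hσb : σ (σ.symm j) = j := σ.apply_symm_apply j
      have e1 : v (σ.symm j) * q j - p j ≥ v (σ.symm j) * q (σ c) - p (σ c) := by
        have := henvy (σ.symm j) (σ c)
        rwa [hσb] at this
      have hIRc : p (σ c) ≤ v c * q (σ c) := hIR c
      have hvbc : v c ≤ v (σ.symm j) := hv hbc
      have hvjc : v c ≤ v j := hv hjc
      have hqjm : q j ≤ q (σ c) := hq hcj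
      have h1 : (v (σ.symm j) - v c) * (q j - q (σ c)) ≤ 0 :=
        mul_nonpos_iff.mpr (Or.inl ⟨by linarith, by linarith⟩)
      by_cases hc2 : (j : ℕ) < n - 1
      · rw [hrec j hc2]
        have hM : maxAbove j hc2 (fun i => v j * q i - pstar i)
            ≤ v j * q j - p j := by
          apply Finset.sup'_le
          intro t ht
          simp only [Finset.mem_filter, Finset.mem_univ, true_and, Fin.lt_def] at ht
          have hpt : p t ≤ pstar t := ih t (by have := t.isLt; omega)
          have e2 : v c * q (σ c) - p (σ c) ≥ v c * q t - p t := henvy c t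
          have hqt : q t ≤ q j := hq (le_of_lt ht)
          have h2 : (v c - v j) * (q j - q t) ≤ 0 :=
            mul_nonpos_iff.mpr (Or.inr ⟨by linarith, by linarith⟩)
          nlinarith [e1, e2, hpt, h1, h2]
        linarith
      · have hval : (j : ℕ) = n - 1 := by have := j.isLt; omega
        have hps : pstar j = v j * q j := by
          have hje : j = (⟨n - 1, by omega⟩ : Fin n) := Fin.ext hval
          rw [hje]; exact hlast
        rw [hps]
        have h2 : 0 ≤ (v j - v c) * q j :=
          mul_nonneg (by linarith) (le_of_lt (hqpos j))
        nlinarith [e1, hIRc, h1, h2]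
  exact Finset.sum_le_sum fun j _ => key n j (by omega)
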